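/- arXiv:1910.12751 — 3 statements merged into one kernel-verified Lean document; each statement's English description precedes it below -/
import Mathlib

section
/- Let M, P, H, V be vectors in ℝ³ with ‖M‖ = 1. Then the Landau–Lifshitz form V = -M×(P+H) - M×(M×(P+H)) holds if and only if the Gilbert-type form V - M×V = -2•(M×(P+H)) holds. (This is the pointwise algebraic content of the equivalence of the first and third forms of the Landau–Lifshitz–Gilbert equation in Lemma 4.1, with P playing the role of ΔM, H the external field, and V the material derivative ∂ₜM + (u·∇)M; one direction uses that the linear map x ↦ x - M×x on ℝ³ is injective.) -/
/-!
Write `c = M × (P + H)`. As `c ⟂ M` and `‖M‖ = 1`, the triple-product expansion gives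
`M × (M × c) = -c`, so the Landau–Lifshitz right-hand side `W = -c - M × c` satisfies
`W - M × W = -2 c`. The map `x ↦ x - M × x` is injective, since `x = M × x` forces
`⟪x, x⟫ = ⟪x, M × x⟫ = 0`; hence `V - M × V = -2 c` holds exactly when `V = W`.
-/

open scoped RealInnerProductSpace

/-- The cross product on `EuclideanSpace ℝ (Fin 3)`. -/
noncomputable def cross3 (a b : EuclideanSpace ℝ (Fin 3)) : EuclideanSpace ℝ (Fin 3) :=
  (WithLp.equiv 2 (Fin 3 → ℝ)).symm
    (crossProduct (WithLp.equiv 2 (Fin 3 → ℝ) a) (WithLp.equiv 2 (Fin 3 → ℝ) b))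

lemma EuclideanSpace.real_inner_eq_dotProduct {ι : Type*} [Fintype ι]
    (x y : EuclideanSpace ℝ ι) : ⟪x, y⟫ = x.ofLp ⬝ᵥ y.ofLp := by
  simp [EuclideanSpace.inner_eq_star_dotProduct, dotProduct_comm]

section Cross3

open EuclideanSpace

variable (a b c : EuclideanSpace ℝ (Fin 3))

lemma ofLp_cross3 : (cross3 a b).ofLp = crossProduct a.ofLp b.ofLp := rfl

lemma cross3_neg_right : cross3 a (-b) = -cross3 a b := by
  ext1; simp [ofLp_cross3]

lemma cross3_sub_right : cross3 a (b - c) = cross3 a b - cross3 a c := by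
  ext1; simp [ofLp_cross3]

lemma inner_self_cross3 : ⟪a, cross3 a b⟫ = 0 := by
  rw [real_inner_eq_dotProduct, ofLp_cross3, dot_self_cross]

lemma inner_cross3_self : ⟪b, cross3 a b⟫ = 0 := by
  rw [real_inner_eq_dotProduct, ofLp_cross3, dot_cross_self]

lemma cross3_cross3 : cross3 a (cross3 b c) = ⟪a, c⟫ • b - ⟪a, b⟫ • c := by
  ext1
  simp [ofLp_cross3, real_inner_eq_dotProduct, cross_cross_eq_smul_sub_smul', dotProduct_comm]

lemma cross3_cross3_cross3_of_norm_eq_one {m : EuclideanSpace ℝ (Fin 3)} (hm : ‖m‖ = 1) :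
    cross3 m (cross3 m (cross3 m b)) = -cross3 m b := by
  rw [cross3_cross3, inner_self_cross3, real_inner_self_eq_norm_sq, hm]
  simp

lemma sub_cross3_injective (m : EuclideanSpace ℝ (Fin 3)) :
    Function.Injective fun x => x - cross3 m x := by
  intro x y hxy
  have hfixed : x - y = cross3 m (x - y) := by
    rw [cross3_sub_right]
    exact sub_eq_sub_iff_sub_eq_sub.mp hxy
  have hinner : ⟪x - y, x - y⟫ = 0 := by
    nth_rw 2 [hfixed]
    exact inner_cross3_self m (x - y)
  exact sub_eq_zero.mp (inner_self_eq_zero.mp hinner)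

end Cross3

/-- Equivalence of the Landau–Lifshitz form and the Gilbert-type form of the
Landau–Lifshitz–Gilbert equation, pointwise algebraic version (Lemma 4.1, forms 1 and 3). -/
theorem llg_first_third_form_equiv
    (M P H V : EuclideanSpace ℝ (Fin 3)) (hM : ‖M‖ = 1) :
    V = -cross3 M (P + H) - cross3 M (cross3 M (P + H)) ↔
      V - cross3 M V = -((2 : ℝ) • cross3 M (P + H)) := by
  set c := cross3 M (P + H)
  have hLL : (-c - cross3 M c) - cross3 M (-c - cross3 M c) = -((2 : ℝ) • c) := by
    rw [cross3_sub_right, cross3_neg_right, cross3_cross3_cross3_of_norm_eq_one _ hM]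
    module
  rw [← hLL]
  exact (sub_cross3_injective M).eq_iff.symm
end

section
/- Let d ≥ 1, let u : ℝ × ℝᵈ → ℝᵈ and F : ℝ × ℝᵈ → ℝ^{d×d} be twice continuously differentiable, suppose the spatial divergence of u vanishes everywhere (Σᵢ ∂ᵢuᵢ(t,x) = 0 for all (t,x)), and suppose F solves the transport equation ∂ₜF_{ij} + Σ_k u_k ∂_k F_{ij} = Σ_k ∂_k u_i F_{kj} at every point (t,x) and all indices i,j. Then the column divergence h of F, defined by h_j(t,x) = Σᵢ ∂ᵢ F_{ij}(t,x), satisfies the transport equation ∂ₜ h_j + Σ_k u_k ∂_k h_j = 0 at every point (t,x) and every index j. (This is the computation at the end of the proof of Lemma 4.2 showing that div F is transported by the flow.) -/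
/-- Time partial derivative of a scalar function on `ℝ × ℝᵈ`. -/
noncomputable def pt {d : ℕ} (f : ℝ × EuclideanSpace ℝ (Fin d) → ℝ)
    (p : ℝ × EuclideanSpace ℝ (Fin d)) : ℝ :=
  fderiv ℝ f p (1, 0)

/-- Spatial partial derivative in the `k`-th direction of a scalar function on `ℝ × ℝᵈ`. -/
noncomputable def px {d : ℕ} (k : Fin d) (f : ℝ × EuclideanSpace ℝ (Fin d) → ℝ)
    (p : ℝ × EuclideanSpace ℝ (Fin d)) : ℝ :=
  fderiv ℝ f p (0, EuclideanSpace.single k 1)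

/-!
Write `T = ∂ₜ + u·∇` and `∂ᵢ` for the spatial partials. Differentiating the transport equation
`T F_{ij} = Σ_k ∂_k u_i F_{kj}` in `xᵢ` gives the commutator identity
`T (∂ᵢ F_{ij}) = ∂ᵢ (T F_{ij}) - Σ_k ∂ᵢ u_k ∂_k F_{ij}`
`= Σ_k ∂_k (∂ᵢ uᵢ) F_{kj} + Σ_k ∂_k uᵢ ∂ᵢ F_{kj} - Σ_k ∂ᵢ u_k ∂_k F_{ij}`,
using that second partials commute. Summing over `i`, the first sum is `Σ_k ∂_k (div u) F_{kj} = 0`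
and the last two cancel after exchanging `i` and `k`.
-/

section Calculus

variable {E F : Type*} [NormedAddCommGroup E] [NormedSpace ℝ E]
  [NormedAddCommGroup F] [NormedSpace ℝ F]

theorem ContDiff.differentiable_fderiv_apply {f : E → F} (hf : ContDiff ℝ 2 f) (v : E) :
    Differentiable ℝ (fun q => fderiv ℝ f q v) :=
  ((hf.fderiv_right (m := 1) le_rfl).differentiable one_ne_zero).clm_apply
    (differentiable_const v)

theorem ContDiff.fderiv_fderiv_apply_comm {f : E → F} (hf : ContDiff ℝ 2 f) (p v w : E) :
    fderiv ℝ (fun q => fderiv ℝ f q w) p v = fderiv ℝ (fun q => fderiv ℝ f q v) p w := by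
  have hDf := (hf.fderiv_right (m := 1) le_rfl).differentiable one_ne_zero
  simp only [fderiv_clm_apply (hDf p) (differentiableAt_const _), fderiv_const_apply]
  simpa using (hf.contDiffAt.isSymmSndFDerivAt (by simp)).eq v w

theorem fderiv_fun_sum_apply {ι : Type*} (s : Finset ι) {f : ι → E → F} {p : E}
    (hf : ∀ i ∈ s, DifferentiableAt ℝ (f i) p) (v : E) :
    fderiv ℝ (fun q => ∑ i ∈ s, f i q) p v = ∑ i ∈ s, fderiv ℝ (f i) p v := by
  rw [fderiv_fun_sum hf, sum_apply]

theorem fderiv_fun_mul_apply {f g : E → ℝ} {p : E} (hf : DifferentiableAt ℝ f p)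
    (hg : DifferentiableAt ℝ g p) (v : E) :
    fderiv ℝ (fun q => f q * g q) p v = fderiv ℝ f p v * g p + f p * fderiv ℝ g p v := by
  rw [fderiv_fun_mul hf hg]
  simp only [add_apply, smul_apply, smul_eq_mul]
  ring

end Calculus

section Transport

variable {E : Type*} [NormedAddCommGroup E] [NormedSpace ℝ E] {ι : Type*} [Fintype ι]

noncomputable def transportDeriv (e₀ : E) (e : ι → E) (u : ι → E → ℝ) (f : E → ℝ) (q : E) : ℝ :=
  fderiv ℝ f q e₀ + ∑ k, u k q * fderiv ℝ f q (e k)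

variable (e₀ : E) (e : ι → E) {u : ι → E → ℝ}

theorem transportDeriv_fun_sum {κ : Type*} (s : Finset κ) {f : κ → E → ℝ} {p : E}
    (hf : ∀ i ∈ s, DifferentiableAt ℝ (f i) p) :
    transportDeriv e₀ e u (fun q => ∑ i ∈ s, f i q) p
      = ∑ i ∈ s, transportDeriv e₀ e u (f i) p := by
  simp only [transportDeriv, fderiv_fun_sum_apply s hf, Finset.mul_sum, Finset.sum_add_distrib]
  rw [Finset.sum_comm]

theorem fderiv_transportDeriv_apply (hu : ∀ k, Differentiable ℝ (u k)) {f : E → ℝ}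
    (hf : ContDiff ℝ 2 f) (p v : E) :
    fderiv ℝ (transportDeriv e₀ e u f) p v
      = transportDeriv e₀ e u (fun q => fderiv ℝ f q v) p
        + ∑ k, fderiv ℝ (u k) p v * fderiv ℝ f p (e k) := by
  have hDf := hf.differentiable_fderiv_apply
  have hsum : Differentiable ℝ fun q => ∑ k, u k q * fderiv ℝ f q (e k) :=
    Differentiable.fun_sum fun k _ => (hu k).fun_mul (hDf (e k))
  unfold transportDeriv
  rw [fderiv_fun_add (hDf e₀ p) (hsum p), add_apply,
    fderiv_fun_sum_apply _ fun k _ => ((hu k).fun_mul (hDf (e k))) p]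
  simp only [fun k => fderiv_fun_mul_apply ((hu k) p) (hDf (e k) p) v,
    hf.fderiv_fderiv_apply_comm p v, Finset.sum_add_distrib]
  ring

theorem transportDeriv_columnDiv_eq_zero {F : ι → ι → E → ℝ}
    (hu : ∀ i, ContDiff ℝ 2 (u i)) (hF : ∀ i j, ContDiff ℝ 2 (F i j))
    (hdiv : ∀ q, ∑ i, fderiv ℝ (u i) q (e i) = 0)
    (htrans : ∀ i j,
      transportDeriv e₀ e u (F i j) = fun q => ∑ k, fderiv ℝ (u i) q (e k) * F k j q)
    (j : ι) (p : E) :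
    transportDeriv e₀ e u (fun q => ∑ i, fderiv ℝ (F i j) q (e i)) p = 0 := by
  have hDu i := (hu i).differentiable_fderiv_apply
  have hFd i j : Differentiable ℝ (F i j) := (hF i j).differentiable two_ne_zero
  have hsource :
      ∑ i, ∑ k, fderiv ℝ (fun q => fderiv ℝ (u i) q (e i)) p (e k) * F k j p = 0 := by
    rw [Finset.sum_comm]
    refine Finset.sum_eq_zero fun k _ => ?_
    rw [← Finset.sum_mul, ← fderiv_fun_sum_apply _ fun i _ => hDu i (e i) p, funext hdiv,
      fderiv_const_apply, zero_apply, zero_mul]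
  have hcross : ∑ i, ∑ k, fderiv ℝ (u i) p (e k) * fderiv ℝ (F k j) p (e i)
      = ∑ i, ∑ k, fderiv ℝ (u k) p (e i) * fderiv ℝ (F i j) p (e k) := Finset.sum_comm
  have hcommuted (i : ι) : transportDeriv e₀ e u (fun q => fderiv ℝ (F i j) q (e i)) p
      = ∑ k, (fderiv ℝ (fun q => fderiv ℝ (u i) q (e i)) p (e k) * F k j p
          + fderiv ℝ (u i) p (e k) * fderiv ℝ (F k j) p (e i))
        - ∑ k, fderiv ℝ (u k) p (e i) * fderiv ℝ (F i j) p (e k) := by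
    rw [eq_sub_iff_add_eq,
      ← fderiv_transportDeriv_apply e₀ e (fun k => (hu k).differentiable two_ne_zero) (hF i j),
      htrans, fderiv_fun_sum_apply _ fun k _ => (hDu i (e k) p).fun_mul (hFd k j p)]
    refine Finset.sum_congr rfl fun k _ => ?_
    rw [fderiv_fun_mul_apply (hDu i (e k) p) (hFd k j p), (hu i).fderiv_fderiv_apply_comm]
  rw [transportDeriv_fun_sum _ _ _ fun i _ => (hF i j).differentiable_fderiv_apply (e i) p]
  simp only [hcommuted, Finset.sum_sub_distrib, Finset.sum_add_distrib, hsource, hcross]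
  ring

end Transport

theorem div_of_transported_is_transported_general
    (d : ℕ)
    (u : Fin d → ℝ × EuclideanSpace ℝ (Fin d) → ℝ)
    (F : Fin d → Fin d → ℝ × EuclideanSpace ℝ (Fin d) → ℝ)
    (hu : ∀ i, ContDiff ℝ 2 (u i))
    (hF : ∀ i j, ContDiff ℝ 2 (F i j))
    (hdiv : ∀ p, ∑ i, px i (u i) p = 0)
    (htrans : ∀ p (i j : Fin d),
        pt (F i j) p + ∑ k, u k p * px k (F i j) p = ∑ k, px k (u i) p * F k j p) :
    ∀ p (j : Fin d),
      pt (fun q => ∑ i, px i (F i j) q) p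
        + ∑ k, u k p * px k (fun q => ∑ i, px i (F i j) q) p = 0 := fun p j =>
  transportDeriv_columnDiv_eq_zero (1, 0) (fun k => (0, EuclideanSpace.single k 1)) hu hF hdiv
    (fun i j => funext fun q => htrans q i j) j p

/-- If `u` is divergence free and `F` solves the transport equation
`∂ₜF_{ij} + Σ_k u_k ∂_k F_{ij} = Σ_k ∂_k u_i F_{kj}`, then the column divergence
`h_j = Σᵢ ∂ᵢ F_{ij}` satisfies `∂ₜ h_j + Σ_k u_k ∂_k h_j = 0`
(the computation at the end of the proof of Lemma 4.2). -/
theorem div_of_transported_is_transported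
    (d : ℕ) (hd : 1 ≤ d)
    (u : Fin d → ℝ × EuclideanSpace ℝ (Fin d) → ℝ)
    (F : Fin d → Fin d → ℝ × EuclideanSpace ℝ (Fin d) → ℝ)
    (hu : ∀ i, ContDiff ℝ 2 (u i))
    (hF : ∀ i j, ContDiff ℝ 2 (F i j))
    (hdiv : ∀ p, ∑ i, px i (u i) p = 0)
    (htrans : ∀ p (i j : Fin d),
        pt (F i j) p + ∑ k, u k p * px k (F i j) p = ∑ k, px k (u i) p * F k j p) :
    ∀ p (j : Fin d),
      pt (fun q => ∑ i, px i (F i j) q) p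
        + ∑ k, u k p * px k (fun q => ∑ i, px i (F i j) q) p = 0 :=
  div_of_transported_is_transported_general d u F hu hF hdiv htrans
end

section
/- Let d ≥ 1, T > 0, and let u : [0,T] × ℝᵈ → ℝᵈ be continuously differentiable with spatial gradient bounded uniformly on [0,T] × ℝᵈ. Suppose F₁, F₂ : [0,T] × ℝᵈ → ℝ^{d×d} are continuously differentiable and both solve the transport equation ∂ₜF_{ij} + Σ_k u_k ∂_k F_{ij} = Σ_k ∂_k u_i F_{kj} at every point of [0,T] × ℝᵈ, with the same initial datum F₁(0,·) = F₂(0,·). Then F₁ = F₂ on [0,T] × ℝᵈ. (This is the uniqueness part of Lemma 4.2 for the transport system for the deformation gradient, proved via characteristics.) -/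
open Set
open scoped NNReal

theorem forall_mem_Icc_of_step {P : ℝ → Prop} {T δ : ℝ} (hδ : 0 < δ) (h0 : P 0)
    (hstep : ∀ s t, 0 ≤ s → s ≤ t → t ≤ T → t - s ≤ δ → P s → P t) :
    ∀ t ∈ Icc 0 T, P t := by
  suffices h : ∀ n : ℕ, ∀ t ∈ Icc 0 T, t ≤ n * δ → P t by
    intro t ht
    obtain ⟨n, hn⟩ := exists_nat_ge (t / δ)
    exact h n t ht ((div_le_iff₀ hδ).1 hn)
  intro n
  induction n with
  | zero =>
    intro t ht htn
    obtain rfl : t = 0 := le_antisymm (by simpa using htn) ht.1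
    exact h0
  | succ n ih =>
    intro t ht htn
    rcases le_or_gt t (n * δ) with h | h
    · exact ih t ht h
    have hn : 0 ≤ (n : ℝ) * δ := by positivity
    refine hstep _ t hn h.le ht.2 (by push_cast at htn; linarith) (ih _ ⟨hn, ?_⟩ le_rfl)
    exact h.le.trans ht.2

theorem exists_hasDerivWithinAt_of_lipschitzWith {E : Type*} [NormedAddCommGroup E]
    [NormedSpace ℝ E] [CompleteSpace E] {v : ℝ → E → E} {K : ℝ≥0} {a b : ℝ}
    (hlip : ∀ t ∈ Icc a b, LipschitzWith K (v t)) (hcont : ∀ x, ContinuousOn (v · x) (Icc a b))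
    (hK : K * (b - a) < 1) (t₀ : Icc a b) (x₀ : E) :
    ∃ α : ℝ → E, α t₀ = x₀ ∧ ∀ t ∈ Icc a b, HasDerivWithinAt α (v t (α t)) (Icc a b) t := by
  obtain ⟨A, hA⟩ := isCompact_Icc.exists_bound_of_continuousOn (hcont x₀)
  have hA0 : 0 ≤ A := (norm_nonneg _).trans (hA t₀ t₀.2)
  have ht₀ : a ≤ t₀ ∧ (t₀ : ℝ) ≤ b := t₀.2
  have hab : 0 ≤ b - a := by linarith
  -- `R` solves `(A + K R) (b - a) = R`: the field is bounded by `A + K R` on the ball of radius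
  -- `R` about `x₀`, and in time `b - a` the solution cannot leave that ball
  set R := A * (b - a) / (1 - K * (b - a)) with hR
  have hR0 : 0 ≤ R := div_nonneg (mul_nonneg hA0 hab) (sub_pos.2 hK).le
  have hRfix : (A + K * R) * (b - a) = R := by
    rw [hR]; field_simp [(sub_pos.2 hK).ne']; ring
  have hpl : IsPicardLindelof v t₀ x₀ R.toNNReal 0 (A + K * R).toNNReal K :=
    { lipschitzOnWith := fun t ht => (hlip t ht).lipschitzOnWith
      continuousOn := fun x _ => hcont x
      norm_le := by
        intro t ht x hx
        rw [Real.coe_toNNReal _ (by positivity)]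
        rw [Real.coe_toNNReal _ hR0, Metric.mem_closedBall, dist_eq_norm] at hx
        have := (hlip t ht).norm_sub_le x x₀
        have := norm_sub_norm_le (v t x) (v t x₀)
        have := hA t ht
        nlinarith [K.2]
      mul_max_le := by
        rw [Real.coe_toNNReal _ (by positivity), NNReal.coe_zero, sub_zero,
          Real.coe_toNNReal _ hR0]
        have hL : 0 ≤ A + K * R := by positivity
        exact (mul_le_mul_of_nonneg_left (max_le (by linarith) (by linarith)) hL).trans
          hRfix.le }
  exact hpl.exists_eq_forall_mem_Icc_hasDerivWithinAt₀

theorem abs_sum_mul_le_card_mul_norm {ι : Type*} [Fintype ι] {a : ι → ℝ} {C : ℝ}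
    (ha : ∀ k, |a k| ≤ C) (v : ι → ℝ) : |∑ k, a k * v k| ≤ Fintype.card ι * C * ‖v‖ := by
  calc |∑ k, a k * v k| ≤ ∑ k, |a k| * |v k| := by
        simpa only [abs_mul] using Finset.abs_sum_le_sum_abs (fun k => a k * v k) Finset.univ
    _ ≤ ∑ _k : ι, C * ‖v‖ := by
        gcongr with k
        · exact (abs_nonneg _).trans (ha k)
        · exact ha k
        · exact norm_le_pi_norm v k
    _ = Fintype.card ι * C * ‖v‖ := by simp [mul_assoc]

variable {d : ℕ}

theorem fderiv_apply_eq_pt_add_sum_px (f : ℝ × EuclideanSpace ℝ (Fin d) → ℝ)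
    (p : ℝ × EuclideanSpace ℝ (Fin d)) (a : ℝ) (w : Fin d → ℝ) :
    fderiv ℝ f p (a, WithLp.toLp 2 w) = a * pt f p + ∑ k, w k * px k f p := by
  have hdecomp : ((a, WithLp.toLp 2 w) : ℝ × EuclideanSpace ℝ (Fin d)) =
      a • (1, 0) + ∑ k, w k • (0, EuclideanSpace.single k 1) := by
    ext k <;> simp [Prod.fst_sum, Prod.snd_sum, Finset.sum_apply, Pi.single_apply]
  rw [hdecomp, map_add, map_smul, map_sum]
  simp only [map_smul, smul_eq_mul, pt, px]

theorem DifferentiableAt.hasDerivWithinAt_comp_prodMk_toLp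
    {f : ℝ × EuclideanSpace ℝ (Fin d) → ℝ} {α : ℝ → Fin d → ℝ} {w : Fin d → ℝ} {S : Set ℝ}
    {t : ℝ} (hf : DifferentiableAt ℝ f (t, WithLp.toLp 2 (α t)))
    (hα : HasDerivWithinAt α w S t) :
    HasDerivWithinAt (fun τ => f (τ, WithLp.toLp 2 (α τ)))
      (pt f (t, WithLp.toLp 2 (α t)) + ∑ k, w k * px k f (t, WithLp.toLp 2 (α t))) S t := by
  have hcurve : HasDerivWithinAt (fun τ => (τ, WithLp.toLp 2 (α τ))) (1, WithLp.toLp 2 w) S t :=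
    (hasDerivWithinAt_id t S).prodMk
      ((PiLp.continuousLinearEquiv 2 ℝ _).symm.hasFDerivAt.comp_hasDerivWithinAt t hα)
  have h := hf.hasFDerivAt.comp_hasDerivWithinAt t hcurve
  rw [fderiv_apply_eq_pt_add_sum_px, one_mul] at h
  exact h

theorem lipschitzWith_of_abs_px_le {f : ℝ × EuclideanSpace ℝ (Fin d) → ℝ}
    (hf : Differentiable ℝ f) {C : ℝ} (hC : 0 ≤ C) {t : ℝ} (hb : ∀ x k, |px k f (t, x)| ≤ C) :
    LipschitzWith (d * C).toNNReal (fun x : Fin d → ℝ => f (t, WithLp.toLp 2 x)) := by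
  let embed : (Fin d → ℝ) →L[ℝ] ℝ × EuclideanSpace ℝ (Fin d) :=
    (ContinuousLinearMap.inr ℝ ℝ _).comp
      (PiLp.continuousLinearEquiv 2 ℝ _).symm.toContinuousLinearMap
  have hderiv : ∀ x : Fin d → ℝ, HasFDerivWithinAt (fun x : Fin d → ℝ => f (t, WithLp.toLp 2 x))
      ((fderiv ℝ f (t, WithLp.toLp 2 x)).comp embed) univ x := by
    intro x
    exact ((hf _).hasFDerivAt.comp x ((hasFDerivAt_prodMk_right t _).comp x
      (PiLp.continuousLinearEquiv 2 ℝ _).symm.hasFDerivAt)).hasFDerivWithinAt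
  have hnorm : ∀ x ∈ univ, ‖(fderiv ℝ f (t, WithLp.toLp 2 x)).comp embed‖ ≤ d * C := by
    intro x _
    refine ContinuousLinearMap.opNorm_le_bound _ (by positivity) fun w => ?_
    have hw : ((fderiv ℝ f (t, WithLp.toLp 2 x)).comp embed) w
        = ∑ k, px k f (t, WithLp.toLp 2 x) * w k := by
      have := fderiv_apply_eq_pt_add_sum_px f (t, WithLp.toLp 2 x) 0 w
      simp only [zero_mul, zero_add, mul_comm (w _)] at this
      exact this
    rw [hw, Real.norm_eq_abs]
    simpa only [Fintype.card_fin] using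
      abs_sum_mul_le_card_mul_norm (fun k => hb (WithLp.toLp 2 x) k) w
  refine LipschitzWith.of_dist_le_mul fun x y => ?_
  rw [Real.coe_toNNReal _ (by positivity), dist_eq_norm, dist_eq_norm]
  exact convex_univ.norm_image_sub_le_of_norm_hasFDerivWithin_le
    (fun x _ => hderiv x) hnorm (mem_univ y) (mem_univ x)

/-- Characteristics are solved in `Fin d → ℝ`: in the sup norm both this field and the linear
system along characteristics have the Lipschitz constant `d * C`. -/
def velocity (u : Fin d → ℝ × EuclideanSpace ℝ (Fin d) → ℝ) (t : ℝ) (x : Fin d → ℝ) :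
    Fin d → ℝ :=
  fun i => u i (t, WithLp.toLp 2 x)

def SolvesTransportOn (u : Fin d → ℝ × EuclideanSpace ℝ (Fin d) → ℝ)
    (F : Fin d → Fin d → ℝ × EuclideanSpace ℝ (Fin d) → ℝ) (I : Set ℝ) : Prop :=
  ∀ t ∈ I, ∀ x (i j : Fin d), pt (F i j) (t, x) + ∑ k, u k (t, x) * px k (F i j) (t, x)
    = ∑ k, px k (u i) (t, x) * F k j (t, x)

section Transport

variable {u : Fin d → ℝ × EuclideanSpace ℝ (Fin d) → ℝ}

theorem lipschitzWith_velocity (hu : ∀ i, Differentiable ℝ (u i)) {C : ℝ} (hC : 0 ≤ C) {t : ℝ}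
    (hb : ∀ x (i k : Fin d), |px k (u i) (t, x)| ≤ C) :
    LipschitzWith (d * C).toNNReal (velocity u t) := by
  refine LipschitzWith.of_dist_le_mul fun x y => (dist_pi_le_iff (by positivity)).2 fun i => ?_
  exact (lipschitzWith_of_abs_px_le (hu i) hC fun x k => hb x i k).dist_le_mul x y

theorem continuous_velocity_left (hu : ∀ i, Continuous (u i)) (x : Fin d → ℝ) :
    Continuous fun t => velocity u t x :=
  continuous_pi fun i => (hu i).comp (continuous_id.prodMk continuous_const)

theorem SolvesTransportOn.hasDerivWithinAt_comp_characteristic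
    {F : Fin d → Fin d → ℝ × EuclideanSpace ℝ (Fin d) → ℝ} {I S : Set ℝ}
    (hF : SolvesTransportOn u F I) (hFd : ∀ i j, Differentiable ℝ (F i j)) {α : ℝ → Fin d → ℝ}
    {t : ℝ} (ht : t ∈ I) (hα : HasDerivWithinAt α (velocity u t (α t)) S t) (i j : Fin d) :
    HasDerivWithinAt (fun τ => F i j (τ, WithLp.toLp 2 (α τ)))
      (∑ k, px k (u i) (t, WithLp.toLp 2 (α t)) * F k j (t, WithLp.toLp 2 (α t))) S t :=
  ((hFd i j _).hasDerivWithinAt_comp_prodMk_toLp hα).congr_deriv (hF t ht _ i j)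

theorem SolvesTransportOn.eq_of_eq_at_left
    {F₁ F₂ : Fin d → Fin d → ℝ × EuclideanSpace ℝ (Fin d) → ℝ} {C s t : ℝ}
    (h₁ : SolvesTransportOn u F₁ (Icc s t)) (h₂ : SolvesTransportOn u F₂ (Icc s t))
    (hu : ∀ i, Differentiable ℝ (u i)) (hF₁ : ∀ i j, Differentiable ℝ (F₁ i j))
    (hF₂ : ∀ i j, Differentiable ℝ (F₂ i j)) (hC : 0 ≤ C)
    (hgrad : ∀ τ ∈ Icc s t, ∀ x (i k : Fin d), |px k (u i) (τ, x)| ≤ C)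
    (hst : s ≤ t) (hsmall : d * C * (t - s) < 1)
    (hs : ∀ x (i j : Fin d), F₁ i j (s, x) = F₂ i j (s, x)) :
    ∀ x (i j : Fin d), F₁ i j (t, x) = F₂ i j (t, x) := by
  intro x i j
  obtain ⟨α, hαt, hα⟩ := exists_hasDerivWithinAt_of_lipschitzWith
    (fun τ hτ => lipschitzWith_velocity hu hC (hgrad τ hτ))
    (fun y => (continuous_velocity_left (fun i => (hu i).continuous) y).continuousOn)
    (by rwa [Real.coe_toNNReal _ (by positivity)]) ⟨t, hst, le_rfl⟩ (WithLp.ofLp x)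
  let G : ℝ → Fin d → ℝ := fun τ k =>
    F₁ k j (τ, WithLp.toLp 2 (α τ)) - F₂ k j (τ, WithLp.toLp 2 (α τ))
  let A : ℝ → Fin d → Fin d → ℝ := fun τ i k => px k (u i) (τ, WithLp.toLp 2 (α τ))
  have hG : ∀ τ ∈ Icc s t, HasDerivWithinAt G (fun i => ∑ k, A τ i k * G τ k) (Icc s t) τ := by
    intro τ hτ
    refine hasDerivWithinAt_pi.2 fun i => ?_
    have h := (h₁.hasDerivWithinAt_comp_characteristic hF₁ hτ (hα τ hτ) i j).sub
      (h₂.hasDerivWithinAt_comp_characteristic hF₂ hτ (hα τ hτ) i j)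
    rw [← Finset.sum_sub_distrib] at h
    exact h.congr_deriv (Finset.sum_congr rfl fun k _ => (mul_sub _ _ _).symm)
  have hG0 := eq_zero_of_abs_deriv_le_mul_abs_self_of_eq_zero_right (K := d * C)
    (fun τ hτ => (hG τ hτ).continuousWithinAt)
    (fun τ hτ => (hG τ (Ico_subset_Icc_self hτ)).mono_of_mem_nhdsWithin
      (Icc_mem_nhdsGE_of_mem hτ))
    (funext fun k => sub_eq_zero.2 (hs _ k j))
    (fun τ hτ => (pi_norm_le_iff_of_nonneg (by positivity)).2 fun i => by
      simpa only [Fintype.card_fin, Real.norm_eq_abs] using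
        abs_sum_mul_le_card_mul_norm (fun k => hgrad τ (Ico_subset_Icc_self hτ) _ i k) (G τ))
    t ⟨hst, le_rfl⟩
  simpa [G, hαt, sub_eq_zero] using congrFun hG0 i

end Transport

theorem transport_uniqueness_general
    (d : ℕ) (T : ℝ)
    (u : Fin d → ℝ × EuclideanSpace ℝ (Fin d) → ℝ)
    (hu : ∀ i, ContDiff ℝ 1 (u i))
    (C : ℝ)
    (hgrad : ∀ t ∈ Set.Icc (0 : ℝ) T, ∀ x (i k : Fin d), |px k (u i) (t, x)| ≤ C)
    (F₁ F₂ : Fin d → Fin d → ℝ × EuclideanSpace ℝ (Fin d) → ℝ)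
    (hF₁ : ∀ i j, ContDiff ℝ 1 (F₁ i j))
    (hF₂ : ∀ i j, ContDiff ℝ 1 (F₂ i j))
    (htrans₁ : ∀ t ∈ Set.Icc (0 : ℝ) T, ∀ x (i j : Fin d),
        pt (F₁ i j) (t, x) + ∑ k, u k (t, x) * px k (F₁ i j) (t, x)
          = ∑ k, px k (u i) (t, x) * F₁ k j (t, x))
    (htrans₂ : ∀ t ∈ Set.Icc (0 : ℝ) T, ∀ x (i j : Fin d),
        pt (F₂ i j) (t, x) + ∑ k, u k (t, x) * px k (F₂ i j) (t, x)
          = ∑ k, px k (u i) (t, x) * F₂ k j (t, x))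
    (hinit : ∀ x (i j : Fin d), F₁ i j (0, x) = F₂ i j (0, x)) :
    ∀ t ∈ Set.Icc (0 : ℝ) T, ∀ x (i j : Fin d), F₁ i j (t, x) = F₂ i j (t, x) := by
  -- `max C 0` keeps the Lipschitz constant `K` nonnegative
  set K := d * max C 0
  have hK : 0 ≤ K := by positivity
  refine forall_mem_Icc_of_step (δ := 1 / (K + 1)) (by positivity) hinit
    fun s t hs hst htT hts hPs => ?_
  have hIcc : Icc s t ⊆ Icc 0 T := Icc_subset_Icc hs htT
  refine SolvesTransportOn.eq_of_eq_at_left (fun τ hτ => htrans₁ τ (hIcc hτ))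
    (fun τ hτ => htrans₂ τ (hIcc hτ)) (fun i => (hu i).differentiable one_ne_zero)
    (fun i j => (hF₁ i j).differentiable one_ne_zero)
    (fun i j => (hF₂ i j).differentiable one_ne_zero) (le_max_right C 0)
    (fun τ hτ x i k => (hgrad τ (hIcc hτ) x i k).trans (le_max_left C 0)) hst ?_ hPs
  calc K * (t - s) ≤ K * (1 / (K + 1)) := by gcongr
    _ < 1 := by rw [mul_one_div, div_lt_one (by positivity)]; linarith

/-- Uniqueness for the transport system for the deformation gradient
(the uniqueness part of Lemma 4.2): two `C¹` solutions of
`∂ₜF_{ij} + Σ_k u_k ∂_k F_{ij} = Σ_k ∂_k u_i F_{kj}` on `[0,T] × ℝᵈ` with the same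
initial datum coincide, provided the spatial gradient of `u` is uniformly bounded. -/
theorem transport_uniqueness
    (d : ℕ) (hd : 1 ≤ d) (T : ℝ) (hT : 0 < T)
    (u : Fin d → ℝ × EuclideanSpace ℝ (Fin d) → ℝ)
    (hu : ∀ i, ContDiff ℝ 1 (u i))
    (C : ℝ)
    (hgrad : ∀ t ∈ Set.Icc (0 : ℝ) T, ∀ x (i k : Fin d), |px k (u i) (t, x)| ≤ C)
    (F₁ F₂ : Fin d → Fin d → ℝ × EuclideanSpace ℝ (Fin d) → ℝ)
    (hF₁ : ∀ i j, ContDiff ℝ 1 (F₁ i j))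
    (hF₂ : ∀ i j, ContDiff ℝ 1 (F₂ i j))
    (htrans₁ : ∀ t ∈ Set.Icc (0 : ℝ) T, ∀ x (i j : Fin d),
        pt (F₁ i j) (t, x) + ∑ k, u k (t, x) * px k (F₁ i j) (t, x)
          = ∑ k, px k (u i) (t, x) * F₁ k j (t, x))
    (htrans₂ : ∀ t ∈ Set.Icc (0 : ℝ) T, ∀ x (i j : Fin d),
        pt (F₂ i j) (t, x) + ∑ k, u k (t, x) * px k (F₂ i j) (t, x)
          = ∑ k, px k (u i) (t, x) * F₂ k j (t, x))
    (hinit : ∀ x (i j : Fin d), F₁ i j (0, x) = F₂ i j (0, x)) :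
    ∀ t ∈ Set.Icc (0 : ℝ) T, ∀ x (i j : Fin d), F₁ i j (t, x) = F₂ i j (t, x) :=
  transport_uniqueness_general d T u hu C hgrad F₁ F₂ hF₁ hF₂ htrans₁ htrans₂ hinit
end
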